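/- arXiv:0901.3822 — 2 statements merged into one kernel-verified Lean document; each statement's English description precedes it below -/
import Mathlib

section
/- Let φ₀, φ₁ ∈ A(D) with ‖φ₀‖₁ = ‖φ₁‖₁ = 1. If Re ∫_D (\bar{φ₀}/|φ₀|)·φ₁ dxdy = 1, then φ₁ = φ₀ almost everywhere on D. -/
open MeasureTheory Complex

noncomputable section

/-- The open unit disk in ℂ. -/
def 𝔻 : Set ℂ := Metric.ball 0 1

/-- Planar Lebesgue measure restricted to the unit disk. -/
def vD : MeasureTheory.Measure ℂ := MeasureTheory.volume.restrict 𝔻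

/-- `A(D)`: holomorphic on the disk and integrable there. -/
def AD (φ : ℂ → ℂ) : Prop := DifferentiableOn ℂ φ 𝔻 ∧ MeasureTheory.Integrable φ vD

/-- L¹ norm over the disk. -/
def nrm (φ : ℂ → ℂ) : ℝ := ∫ z, ‖φ z‖ ∂vD

/-- Pairing Re ∫_D μ φ. -/
def pair (μ φ : ℂ → ℂ) : ℝ := (∫ z, μ z * φ z ∂vD).re

/-- Infinitesimal Teichmüller norm. -/
def lam (μ : ℂ → ℂ) : ℝ := sSup {r : ℝ | ∃ φ, AD φ ∧ nrm φ = 1 ∧ r = pair μ φ}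

/-- Unit Teichmüller differential `conj φ / |φ|`. -/
def tmu (φ : ℂ → ℂ) (z : ℂ) : ℂ := (starRingEnd ℂ) (φ z) / ((‖φ z‖ : ℝ) : ℂ)

/-- Cosine of the angle between geodesic directions. -/
def ang (φ ψ : ℂ → ℂ) : ℝ := (∫ z, tmu φ z * ψ z ∂vD).re

end

/-!
Pointwise `Re (conj φ₀ φ₁ / |φ₀|) ≤ |φ₁|`, so equality of the integrals with `‖φ₁‖₁ = 1` forces
`conj φ₀ · φ₁ ≥ 0` almost everywhere, hence everywhere on `D` by continuity. Near a zero-free point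
of `φ₀` the quotient `φ₁ / φ₀` is then a real-valued holomorphic function, hence constant by the
open mapping theorem; the identity theorem gives `φ₁ = c φ₀` on `D` with `c ≥ 0`, and comparing
`L¹` norms gives `c = 1`.
-/

open MeasureTheory Complex ComplexConjugate Set Filter Topology
open scoped ComplexOrder

lemma norm_tmu_le_one (φ : ℂ → ℂ) (z : ℂ) : ‖tmu φ z‖ ≤ 1 := by
  by_cases h : φ z = 0 <;> simp [tmu, h]

lemma Complex.conj_mul_nonneg_of_re_eq_norm {a b : ℂ} (h : (conj a / ‖a‖ * b).re = ‖b‖) :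
    0 ≤ conj a * b := by
  rcases eq_or_ne a 0 with rfl | ha
  · simp
  have hnorm : ‖conj a / ‖a‖ * b‖ = ‖b‖ := by simp [ha]
  have hunit : 0 ≤ conj a / ‖a‖ * b := re_eq_norm.1 (h.trans hnorm.symm)
  have hsplit : conj a * b = ‖a‖ * (conj a / ‖a‖ * b) := by
    field_simp [ofReal_ne_zero.2 (norm_ne_zero_iff.2 ha)]
  rw [hsplit]
  exact mul_nonneg (zero_le_real.2 (norm_nonneg a)) hunit

lemma Complex.div_nonneg_of_conj_mul_nonneg {a b : ℂ} (h : 0 ≤ conj b * a) : 0 ≤ a / b := by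
  rcases eq_or_ne b 0 with rfl | hb
  · simp
  have hquot : a / b = conj b * a / (normSq b : ℂ) := by
    rw [normSq_eq_conj_mul_self, mul_div_mul_left a b ((map_ne_zero _).2 hb)]
  rw [hquot]
  exact div_nonneg h (zero_le_real.2 (normSq_nonneg b))

section Integral

variable {μ : Measure ℂ} {φ ψ : ℂ → ℂ}

lemma aemeasurable_tmu (hφ : AEMeasurable φ μ) : AEMeasurable (tmu φ) μ :=
  (continuous_conj.measurable.comp_aemeasurable hφ).div
    (continuous_ofReal.measurable.comp_aemeasurable hφ.norm)

lemma integrable_tmu_mul (hφ : AEMeasurable φ μ) (hψ : Integrable ψ μ) :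
    Integrable (fun z => tmu φ z * ψ z) μ := by
  refine hψ.norm.mono' ((aemeasurable_tmu hφ).mul hψ.aemeasurable).aestronglyMeasurable
    (Eventually.of_forall fun z => ?_)
  rw [norm_mul]
  exact mul_le_of_le_one_left (norm_nonneg _) (norm_tmu_le_one φ z)

lemma ae_conj_mul_nonneg_of_re_integral_tmu_mul_eq (hφ : AEMeasurable φ μ) (hψ : Integrable ψ μ)
    (h : (∫ z, tmu φ z * ψ z ∂μ).re = ∫ z, ‖ψ z‖ ∂μ) :
    ∀ᵐ z ∂μ, 0 ≤ conj (φ z) * ψ z := by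
  have hint := integrable_tmu_mul hφ hψ
  have hle : (fun z => (tmu φ z * ψ z).re) ≤ᵐ[μ] fun z => ‖ψ z‖ :=
    Eventually.of_forall fun z => (re_le_norm _).trans <| by
      rw [norm_mul]; exact mul_le_of_le_one_left (norm_nonneg _) (norm_tmu_le_one φ z)
  have hre : ∫ z, (tmu φ z * ψ z).re ∂μ = ∫ z, ‖ψ z‖ ∂μ := by
    rw [← h]; exact integral_re hint
  filter_upwards [(integral_eq_iff_of_ae_le hint.re hψ.norm hle).1 hre] with z hz
  exact conj_mul_nonneg_of_re_eq_norm hz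

end Integral

lemma ContinuousOn.mapsTo_of_ae_restrict_mem {X Y : Type*} [TopologicalSpace X]
    [MeasurableSpace X] [OpensMeasurableSpace X] [TopologicalSpace Y] {μ : Measure X}
    [μ.IsOpenPosMeasure] {f : X → Y} {U : Set X} {s : Set Y} (hf : ContinuousOn f U)
    (hU : IsOpen U) (hs : IsClosed s) (h : ∀ᵐ x ∂μ.restrict U, f x ∈ s) : MapsTo f U s := by
  have hopen : IsOpen (U ∩ f ⁻¹' sᶜ) := hf.isOpen_inter_preimage hU hs.isOpen_compl
  have hnull : μ (U ∩ f ⁻¹' sᶜ) = 0 := by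
    rw [ae_restrict_iff' hU.measurableSet, ae_iff] at h
    simp only [Classical.not_imp] at h
    exact h
  intro x hx
  by_contra hfx
  exact (hopen.eq_empty_of_measure_zero hnull).subset ⟨hx, hfx⟩

lemma AnalyticOnNhd.exists_eq_const_of_im_eq_zero {f : ℂ → ℂ} {U : Set ℂ}
    (hf : AnalyticOnNhd ℂ f U) (hU : IsOpen U) (hUc : IsPreconnected U)
    (him : ∀ z ∈ U, (f z).im = 0) : ∃ w, ∀ z ∈ U, f z = w := by
  rcases hf.is_constant_or_isOpen hUc with hconst | hopen
  · exact hconst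
  have hsub : f '' U ⊆ interior (im ⁻¹' {0}) :=
    (hopen U subset_rfl hU).subset_interior_iff.2 (by rintro _ ⟨z, hz, rfl⟩; exact him z hz)
  rw [interior_preimage_im, interior_singleton, preimage_empty, subset_empty_iff,
    image_eq_empty] at hsub
  exact ⟨0, by simp [hsub]⟩

lemma exists_nonneg_eqOn_const_mul_of_conj_mul_nonneg {f g : ℂ → ℂ} {U : Set ℂ}
    (hf : DifferentiableOn ℂ f U) (hg : DifferentiableOn ℂ g U) (hU : IsOpen U)
    (hUc : IsPreconnected U) {z₀ : ℂ} (hz₀ : z₀ ∈ U) (hgz₀ : g z₀ ≠ 0)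
    (hfg : ∀ z ∈ U, 0 ≤ conj (g z) * f z) : ∃ c : ℂ, 0 ≤ c ∧ EqOn f (fun z => c * g z) U := by
  have hfa := hf.analyticOnNhd hU
  have hga := hg.analyticOnNhd hU
  obtain ⟨ε, hε, hball⟩ : ∃ ε > 0, Metric.ball z₀ ε ⊆ U ∩ g ⁻¹' {0}ᶜ :=
    Metric.isOpen_iff.1 (hg.continuousOn.isOpen_inter_preimage hU isOpen_compl_singleton) z₀
      ⟨hz₀, hgz₀⟩
  have hquot : AnalyticOnNhd ℂ (fun z => f z / g z) (Metric.ball z₀ ε) := fun z hz =>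
    (hfa z (hball hz).1).div (hga z (hball hz).1) (hball hz).2
  have hquot_nonneg : ∀ z ∈ Metric.ball z₀ ε, 0 ≤ f z / g z := fun z hz =>
    div_nonneg_of_conj_mul_nonneg (hfg z (hball hz).1)
  obtain ⟨c, hc⟩ := hquot.exists_eq_const_of_im_eq_zero Metric.isOpen_ball
    (convex_ball z₀ ε).isPreconnected fun z hz => (nonneg_iff.1 (hquot_nonneg z hz)).2.symm
  have hball_eq : EqOn f (fun z => c * g z) (Metric.ball z₀ ε) := fun z hz =>
    (div_eq_iff (hball hz).2).1 (hc z hz)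
  have hz₀_ball : z₀ ∈ Metric.ball z₀ ε := Metric.mem_ball_self hε
  refine ⟨c, hc z₀ hz₀_ball ▸ hquot_nonneg z₀ hz₀_ball, ?_⟩
  exact hfa.eqOn_of_preconnected_of_eventuallyEq (analyticOnNhd_const.mul hga) hUc hz₀
    (eventuallyEq_of_mem (Metric.ball_mem_nhds z₀ hε) hball_eq)

lemma exists_mem_ne_zero_of_nrm_ne_zero {φ : ℂ → ℂ} (h : nrm φ ≠ 0) : ∃ z ∈ 𝔻, φ z ≠ 0 := by
  by_contra! hzero
  exact h (setIntegral_eq_zero_of_forall_eq_zero fun z hz => by simp [hzero z hz])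

lemma nrm_const_mul_of_eqOn {φ ψ : ℂ → ℂ} (c : ℂ) (h : EqOn ψ (fun z => c * φ z) 𝔻) :
    nrm ψ = ‖c‖ * nrm φ := by
  rw [nrm, nrm, vD, ← integral_const_mul]
  exact setIntegral_congr_fun measurableSet_ball fun z hz => by simp [h hz]

/-- equality in the pairing forces φ₁ = φ₀ a.e. -/
theorem stmt3 (φ₀ φ₁ : ℂ → ℂ) (h₀ : AD φ₀) (h₁ : AD φ₁)
    (hn₀ : nrm φ₀ = 1) (hn₁ : nrm φ₁ = 1)
    (h : (∫ z, tmu φ₀ z * φ₁ z ∂vD).re = 1) :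
    ∀ᵐ z ∂vD, φ₁ z = φ₀ z := by
  have hD : IsOpen 𝔻 := Metric.isOpen_ball
  have hcont : ContinuousOn (fun z => conj (φ₀ z) * φ₁ z) 𝔻 :=
    (continuous_conj.comp_continuousOn h₀.1.continuousOn).mul h₁.1.continuousOn
  have hnonneg : ∀ z ∈ 𝔻, 0 ≤ conj (φ₀ z) * φ₁ z :=
    hcont.mapsTo_of_ae_restrict_mem hD isClosed_Ici <|
      ae_conj_mul_nonneg_of_re_integral_tmu_mul_eq
        (h₀.1.continuousOn.aemeasurable hD.measurableSet) h₁.2 (h.trans hn₁.symm)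
  obtain ⟨z₀, hz₀, hφ₀z₀⟩ := exists_mem_ne_zero_of_nrm_ne_zero (hn₀.symm ▸ one_ne_zero)
  obtain ⟨c, hc, hEq⟩ := exists_nonneg_eqOn_const_mul_of_conj_mul_nonneg h₁.1 h₀.1 hD
    (convex_ball (0 : ℂ) 1).isPreconnected hz₀ hφ₀z₀ hnonneg
  have hc_norm : 1 = ‖c‖ := by simpa [hn₀, hn₁] using nrm_const_mul_of_eqOn c hEq
  have hc_one : c = 1 := by rw [eq_coe_norm_of_nonneg hc, ← hc_norm, ofReal_one]
  filter_upwards [ae_restrict_mem measurableSet_ball] with z hz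
  simp [hEq hz, hc_one]
end

section
/- If φ, ψ ∈ A(D) are unit-norm and |φ| = |ψ| almost everywhere with c(φ,ψ) = −1, then ψ = −φ almost everywhere, i.e., the angle π between geodesic directions generated by φ and ψ occurs exactly when the directions are opposite. -/
open MeasureTheory Complex

/-
The pointwise bound `Re (tmu φ · ψ) ≥ -|ψ|` integrates to `ang φ ψ ≥ -nrm ψ = -1`, so `ang φ ψ = -1`
forces equality almost everywhere. At a point of equality `tmu φ · ψ = -|ψ| = -|φ| = -(tmu φ · φ)`, and
`tmu φ` can be cancelled wherever `φ ≠ 0`; where `φ = 0` also `ψ = 0`.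
-/

theorem Complex.eq_neg_ofReal_of_norm_le_of_re_eq_neg {w : ℂ} {r : ℝ} (hle : ‖w‖ ≤ r)
    (hre : w.re = -r) : w = -r := by
  have him : w.im = 0 := by
    refine abs_re_eq_norm.1 (le_antisymm (abs_re_le_norm w) ?_)
    rw [hre, abs_neg]
    exact hle.trans (le_abs_self r)
  exact Complex.ext (by simp [hre]) (by simp [him])

theorem norm_tmu (φ : ℂ → ℂ) (z : ℂ) : ‖tmu φ z‖ = ‖φ z‖ / ‖φ z‖ := by
  rw [tmu, norm_div, norm_conj, norm_real, norm_norm]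

theorem tmu_mul_self (φ : ℂ → ℂ) (z : ℂ) : tmu φ z * φ z = ‖φ z‖ := by
  rcases eq_or_ne (φ z) 0 with h | h
  · simp [h]
  · have hnorm : (‖φ z‖ : ℂ) ≠ 0 := by simpa using h
    rw [tmu, div_mul_eq_mul_div, conj_mul', div_eq_iff hnorm]
    ring

theorem norm_tmu_mul_le (φ : ℂ → ℂ) (z w : ℂ) : ‖tmu φ z * w‖ ≤ ‖w‖ := by
  rw [norm_mul, norm_tmu]
  exact mul_le_of_le_one_left (norm_nonneg w) (div_self_le_one _)

theorem neg_norm_le_re_tmu_mul (φ : ℂ → ℂ) (z w : ℂ) : -‖w‖ ≤ (tmu φ z * w).re :=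
  neg_le.1 <| (neg_re _ ▸ re_le_norm _).trans ((norm_neg _).trans_le (norm_tmu_mul_le φ z w))

theorem eq_neg_of_tmu_mul_eq_neg_norm {φ ψ : ℂ → ℂ} {z : ℂ} (hmod : ‖φ z‖ = ‖ψ z‖)
    (h : tmu φ z * ψ z = -‖ψ z‖) : ψ z = -φ z := by
  rcases eq_or_ne (φ z) 0 with h0 | h0
  · rw [h0, norm_zero, eq_comm, norm_eq_zero] at hmod
    rw [hmod, h0, neg_zero]
  · have htmu : tmu φ z ≠ 0 := by
      rw [← norm_ne_zero_iff, norm_tmu, div_self (norm_ne_zero_iff.2 h0)]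
      exact one_ne_zero
    refine mul_left_cancel₀ htmu ?_
    rw [h, mul_neg, tmu_mul_self, hmod]

theorem stmt17_general (φ ψ : ℂ → ℂ)
    (hnψ : nrm ψ = 1)
    (hmod : ∀ᵐ z ∂vD, ‖φ z‖ = ‖ψ z‖)
    (hc : ang φ ψ = -1) :
    ∀ᵐ z ∂vD, ψ z = -φ z := by
  have hint : Integrable (fun z => tmu φ z * ψ z) vD := by
    refine Integrable.of_integral_ne_zero fun h => ?_
    rw [ang, h, zero_re] at hc
    norm_num at hc
  have hnorm : Integrable (fun z => ‖ψ z‖) vD :=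
    Integrable.of_integral_ne_zero (by rw [← nrm, hnψ]; exact one_ne_zero)
  have hle : (fun z => -‖ψ z‖) ≤ᵐ[vD] fun z => (tmu φ z * ψ z).re :=
    ae_of_all _ fun z => neg_norm_le_re_tmu_mul φ z (ψ z)
  have heq : ∫ z, -‖ψ z‖ ∂vD = ∫ z, (tmu φ z * ψ z).re ∂vD := by
    rw [integral_neg, ← nrm, hnψ, ← hc, ang]
    exact (integral_re hint).symm
  filter_upwards [(integral_eq_iff_of_ae_le hnorm.neg hint.re hle).1 heq, hmod] with z hre hz
  exact eq_neg_of_tmu_mul_eq_neg_norm hz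
    (eq_neg_ofReal_of_norm_le_of_re_eq_neg (norm_tmu_mul_le φ z (ψ z)) hre.symm)

/-- angle π with equal moduli occurs exactly for opposite directions. -/
theorem stmt17 (φ ψ : ℂ → ℂ) (hφ : AD φ) (hψ : AD ψ)
    (hnφ : nrm φ = 1) (hnψ : nrm ψ = 1)
    (hmod : ∀ᵐ z ∂vD, ‖φ z‖ = ‖ψ z‖)
    (hc : ang φ ψ = -1) :
    ∀ᵐ z ∂vD, ψ z = -φ z :=
  stmt17_general φ ψ hnψ hmod hc
end
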